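/- arXiv:2502.12603 — 3 statements merged into one kernel-verified Lean document; each statement's English description precedes it below -/
import Mathlib

section
/- Let p, q, m be natural numbers. Let ĝ : ℝ^p → ℝ^m be a differentiable map whose Fréchet derivative at every point is an injective linear map, and let h : ℝ^p × ℝ^q → ℝ^p be differentiable. If the composition ĝ ∘ h does not depend on its second argument, i.e. for all u ∈ ℝ^p and all v, v' ∈ ℝ^q one has ĝ(h(u,v)) = ĝ(h(u,v')), then h itself does not depend on its second argument: for all u ∈ ℝ^p and all v, v' ∈ ℝ^q, h(u,v) = h(u,v'). -/
open Function

section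

variable {𝕜 E F G : Type*} [NormedAddCommGroup E] [NormedAddCommGroup F] [NormedAddCommGroup G]
  {g : F → G} {f : E → F}

theorem fderiv_eq_zero_of_comp_const_of_injective [NontriviallyNormedField 𝕜] [NormedSpace 𝕜 E]
    [NormedSpace 𝕜 F] [NormedSpace 𝕜 G] {x : E} (hg : DifferentiableAt 𝕜 g (f x))
    (hinj : Injective (fderiv 𝕜 g (f x))) (hf : DifferentiableAt 𝕜 f x)
    (hgf : ∀ y z, g (f y) = g (f z)) : fderiv 𝕜 f x = 0 := by
  have hcomp_zero : (fderiv 𝕜 g (f x)).comp (fderiv 𝕜 f x) = 0 := by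
    rw [← fderiv_comp x hg hf, show g ∘ f = fun _ => g (f x) from funext fun y => hgf y x]
    exact fderiv_const_apply _
  exact ContinuousLinearMap.ext fun v => hinj (by simpa using congr($hcomp_zero v))

theorem eq_of_comp_const_of_fderiv_injective [RCLike 𝕜] [NormedSpace 𝕜 E]
    [NormedSpace 𝕜 F] [NormedSpace 𝕜 G] (hg : Differentiable 𝕜 g)
    (hinj : ∀ y, Injective (fderiv 𝕜 g y)) (hf : Differentiable 𝕜 f)
    (hgf : ∀ y z, g (f y) = g (f z)) (y z : E) : f y = f z :=
  is_const_of_fderiv_eq_zero hf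
    (fun x => fderiv_eq_zero_of_comp_const_of_injective (hg _) (hinj _) (hf x) hgf) y z

end

/-- If `ĝ` is differentiable with everywhere injective Fréchet derivative
and `h` is differentiable, and `ĝ ∘ h` does not depend on its second argument,
then `h` does not depend on its second argument. -/
theorem stmt0 (p q m : ℕ)
    (gHat : (Fin p → ℝ) → (Fin m → ℝ))
    (h : (Fin p → ℝ) × (Fin q → ℝ) → (Fin p → ℝ))
    (hgHat_diff : Differentiable ℝ gHat)
    (hgHat_inj : ∀ x : Fin p → ℝ, Function.Injective (fderiv ℝ gHat x))
    (hh_diff : Differentiable ℝ h)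
    (hcomp : ∀ (u : Fin p → ℝ) (v v' : Fin q → ℝ), gHat (h (u, v)) = gHat (h (u, v'))) :
    ∀ (u : Fin p → ℝ) (v v' : Fin q → ℝ), h (u, v) = h (u, v') := fun u =>
  eq_of_comp_const_of_fderiv_injective hgHat_diff hgHat_inj
    (hh_diff.comp ((differentiable_const u).prodMk differentiable_id)) (hcomp u)
end

section
/- Let n_s, n₁, n₂, m₁, m₂ be natural numbers. Let ĝ₁ : ℝ^{n_s} × ℝ^{n₁} → ℝ^{m₁} and ĝ₂ : ℝ^{n_s} × ℝ^{n₂} → ℝ^{m₂} be differentiable maps whose Fréchet derivatives are injective at every point. Let h : ℝ^{n_s} × ℝ^{n₁} × ℝ^{n₂} → ℝ^{n_s} × ℝ^{n₁} × ℝ^{n₂} be differentiable, with component functions h = (h_s, h₁, h₂) taking values in ℝ^{n_s}, ℝ^{n₁}, ℝ^{n₂} respectively. Suppose there exist functions g₁ : ℝ^{n_s} × ℝ^{n₁} → ℝ^{m₁} and g₂ : ℝ^{n_s} × ℝ^{n₂} → ℝ^{m₂} such that for all (u, v, w) ∈ ℝ^{n_s} × ℝ^{n₁} × ℝ^{n₂}: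 ĝ₁(h_s(u,v,w), h₁(u,v,w)) = g₁(u,v) and ĝ₂(h_s(u,v,w), h₂(u,v,w)) = g₂(u,w). Then h_s depends only on its first argument: for all u ∈ ℝ^{n_s} and all v, v' ∈ ℝ^{n₁}, w, w' ∈ ℝ^{n₂}, h_s(u,v,w) = h_s(u,v',w'). -/
/-! A map with injective derivative kills no tangent direction, so if `ĝ₁ ∘ (h_s, h₁)` does not
depend on `w`, neither does `(h_s, h₁)`, by the chain rule and the mean value theorem; likewise
`ĝ₂ ∘ (h_s, h₂)` shows that `h_s` does not depend on `v`. -/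

section

variable {𝕜 E F G : Type*} [RCLike 𝕜]
  [NormedAddCommGroup E] [NormedSpace 𝕜 E]
  [NormedAddCommGroup F] [NormedSpace 𝕜 F]
  [NormedAddCommGroup G] [NormedSpace 𝕜 G]

theorem fderiv_eq_zero_of_comp_eq_const {g : F → G} {f : E → F} {c : G} {x : E}
    (hg : DifferentiableAt 𝕜 g (f x)) (hg_inj : Function.Injective (fderiv 𝕜 g (f x)))
    (hf : DifferentiableAt 𝕜 f x) (hconst : ∀ y, g (f y) = c) :
    fderiv 𝕜 f x = 0 := by
  have hcomp : (fderiv 𝕜 g (f x)).comp (fderiv 𝕜 f x) = 0 := by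
    rw [← fderiv_comp x hg hf, show g ∘ f = fun _ => c from funext hconst, fderiv_fun_const]
    rfl
  ext v
  exact hg_inj (by simpa using congrArg (· v) hcomp)

theorem eq_of_comp_eq_const {g : F → G} {f : E → F} {c : G}
    (hg : ∀ x, DifferentiableAt 𝕜 g (f x)) (hg_inj : ∀ x, Function.Injective (fderiv 𝕜 g (f x)))
    (hf : Differentiable 𝕜 f) (hconst : ∀ x, g (f x) = c) (x y : E) :
    f x = f y :=
  is_const_of_fderiv_eq_zero hf
    (fun x => fderiv_eq_zero_of_comp_eq_const (hg x) (hg_inj x) (hf x) hconst) x y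

end

/-- Subspace identifiability of the long-term latent variables. -/
theorem stmt1 (ns n1 n2 m1 m2 : ℕ)
    (gHat1 : (Fin ns → ℝ) × (Fin n1 → ℝ) → (Fin m1 → ℝ))
    (gHat2 : (Fin ns → ℝ) × (Fin n2 → ℝ) → (Fin m2 → ℝ))
    (hs : (Fin ns → ℝ) × (Fin n1 → ℝ) × (Fin n2 → ℝ) → (Fin ns → ℝ))
    (h1 : (Fin ns → ℝ) × (Fin n1 → ℝ) × (Fin n2 → ℝ) → (Fin n1 → ℝ))
    (h2 : (Fin ns → ℝ) × (Fin n1 → ℝ) × (Fin n2 → ℝ) → (Fin n2 → ℝ))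
    (g1 : (Fin ns → ℝ) × (Fin n1 → ℝ) → (Fin m1 → ℝ))
    (g2 : (Fin ns → ℝ) × (Fin n2 → ℝ) → (Fin m2 → ℝ))
    (hgHat1_diff : Differentiable ℝ gHat1)
    (hgHat2_diff : Differentiable ℝ gHat2)
    (hgHat1_inj : ∀ x, Function.Injective (fderiv ℝ gHat1 x))
    (hgHat2_inj : ∀ x, Function.Injective (fderiv ℝ gHat2 x))
    (hh_diff : Differentiable ℝ (fun x => (hs x, h1 x, h2 x)))
    (heq1 : ∀ (u : Fin ns → ℝ) (v : Fin n1 → ℝ) (w : Fin n2 → ℝ),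
      gHat1 (hs (u, v, w), h1 (u, v, w)) = g1 (u, v))
    (heq2 : ∀ (u : Fin ns → ℝ) (v : Fin n1 → ℝ) (w : Fin n2 → ℝ),
      gHat2 (hs (u, v, w), h2 (u, v, w)) = g2 (u, w)) :
    ∀ (u : Fin ns → ℝ) (v v' : Fin n1 → ℝ) (w w' : Fin n2 → ℝ),
      hs (u, v, w) = hs (u, v', w') := by
  have hs_diff : Differentiable ℝ hs := hh_diff.fst
  have h1_diff : Differentiable ℝ h1 := hh_diff.snd.fst
  have h2_diff : Differentiable ℝ h2 := hh_diff.snd.snd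
  intro u v v' w w'
  have hs_indep_v : hs (u, v, w) = hs (u, v', w) :=
    congrArg Prod.fst <| eq_of_comp_eq_const (fun _ => hgHat2_diff _) (fun _ => hgHat2_inj _)
      (f := fun v => (hs (u, v, w), h2 (u, v, w))) (by fun_prop) (fun v => heq2 u v w) v v'
  have hs_indep_w : hs (u, v', w) = hs (u, v', w') :=
    congrArg Prod.fst <| eq_of_comp_eq_const (fun _ => hgHat1_diff _) (fun _ => hgHat1_inj _)
      (f := fun w => (hs (u, v', w), h1 (u, v', w))) (by fun_prop) (heq1 u v') w w'
  exact hs_indep_v.trans hs_indep_w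
end

section
/- Let n_s, n_d be natural numbers and set n = n_s + n_d. For each k ∈ {1,…,n}, let q_k : ℝ × ℝ^{n_d} → ℝ be twice continuously differentiable, and let h : ℝ^n → ℝ^n be twice continuously differentiable with det(Dh(ẑ)) ≠ 0 for every ẑ. Define L̂ : ℝ^n × ℝ^{n_d} → ℝ by L̂(ẑ, u) = Σ_{k=1}^{n} q_k((h(ẑ))_k, u) + log |det(Dh(ẑ))|. Assume: (i) for every i ∈ {1,…,n_s}, l ∈ {1,…,n_d} and every (ẑ,u), the mixed second partial derivative ∂²L̂/∂u_l ∂ẑ_i (ẑ,u) = 0; (ii) for every k ∈ {1,…,n_s}, l ∈ {1,…,n_d} and every (z,u) ∈ ℝ × ℝ^{n_d}, the mixed second partial derivative ∂²q_k/∂u_l ∂z (z,u) = 0; (iii) for every (ẑ,u), the n_d vectors v_1,…,v_{n_d} ∈ ℝ^{n_d} defined by (v_l)_j = ∂²q_{n_s+j}/∂u_l ∂z evaluated at ((h(ẑ))_{n_s+j}, u), for l ∈ {1,…,n_d}, are linearly independent. Then for every i ∈ {1,…,n_s}, every j ∈ {1,…,n_d} and every ẑ ∈ ℝ^n, the partial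 derivative ∂(h(ẑ))_{n_s+j}/∂ẑ_i = 0. -/
/-!
Differentiating `L̂` in `ẑ_i` (`i` long-term) and then in `u_l` kills the `log |det Dh|` term,
which does not depend on `u`, and leaves `∑ₖ ∂hₖ/∂ẑᵢ · ∂²qₖ/∂u_l∂z`. By (ii) only the
short-term indices `k = n_s + j` contribute, so by (i) the vector `(∂h_{n_s+j}/∂ẑᵢ)_j` is
orthogonal to every `v_l`; the `n_d` vectors `v_l` are linearly independent in `ℝ^{n_d}`, hence
it vanishes.
-/

theorem LinearIndependent.eq_zero_of_forall_dotProduct_eq_zero {K ι : Type*} [Field K]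
    [Fintype ι] [DecidableEq ι] {v : ι → ι → K} (hv : LinearIndependent K v) {w : ι → K}
    (hw : ∀ l, w ⬝ᵥ v l = 0) : w = 0 := by
  have hunit : IsUnit (Matrix.of v) := Matrix.linearIndependent_rows_iff_isUnit.mp hv
  refine Matrix.mulVec_injective_iff_isUnit.mpr hunit ?_
  ext l
  simpa [Matrix.mulVec, dotProduct_comm] using hw l

theorem Matrix.differentiable_det {𝕜 ι : Type*} [NontriviallyNormedField 𝕜] [Fintype ι]
    [DecidableEq ι] : Differentiable 𝕜 (fun A : ι → ι → 𝕜 => (Matrix.of A).det) := by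
  simp only [Matrix.det_apply, Matrix.of_apply]
  fun_prop

theorem ContinuousLinearMap.differentiable_det {𝕜 E : Type*} [NontriviallyNormedField 𝕜]
    [CompleteSpace 𝕜] [NormedAddCommGroup E] [NormedSpace 𝕜 E] [FiniteDimensional 𝕜 E] :
    Differentiable 𝕜 (fun f : E →L[𝕜] E => f.det) := by
  classical
  let b := Module.finBasis 𝕜 E
  have hdet_eq : (fun f : E →L[𝕜] E => f.det) =
      (fun A => (Matrix.of A).det) ∘ fun f : E →L[𝕜] E => fun i j => b.equivFunL (f (b j)) i := by
    funext f
    simp only [Function.comp_apply, ContinuousLinearMap.det]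
    rw [← LinearMap.det_toMatrix b]
    congr 1
    ext i j
    simp [LinearMap.toMatrix_apply]
  rw [hdet_eq]
  exact Matrix.differentiable_det.comp (by fun_prop)

theorem ContDiff.differentiable_log_abs_det_fderiv {E : Type*} [NormedAddCommGroup E]
    [NormedSpace ℝ E] [FiniteDimensional ℝ E] {h : E → E} (hh : ContDiff ℝ 2 h)
    (hdet : ∀ z, (fderiv ℝ h z).det ≠ 0) :
    Differentiable ℝ fun z => Real.log |(fderiv ℝ h z).det| := by
  have hDh : Differentiable ℝ (fderiv ℝ h) :=
    (hh.fderiv_right (m := 1) (by norm_num)).differentiable one_ne_zero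
  simp_rw [Real.log_abs]
  intro z
  have hdet' : DifferentiableAt ℝ ((fun f : E →L[ℝ] E => f.det) ∘ fderiv ℝ h) z :=
    (ContinuousLinearMap.differentiable_det _).comp z (hDh z)
  exact hdet'.log (hdet z)

section

open ContinuousLinearMap

variable {𝕜 E F G : Type*} [NontriviallyNormedField 𝕜]
  [NormedAddCommGroup E] [NormedSpace 𝕜 E] [NormedAddCommGroup F] [NormedSpace 𝕜 F]
  [NormedAddCommGroup G] [NormedSpace 𝕜 G]

theorem DifferentiableAt.deriv_comp_prodMk_left {q : 𝕜 × F → G} {y : 𝕜} {u : F}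
    (hq : DifferentiableAt 𝕜 q (y, u)) :
    deriv (fun y' => q (y', u)) y = fderiv 𝕜 q (y, u) (1, 0) :=
  (hq.hasFDerivAt.comp_hasDerivAt y ((hasDerivAt_id y).prodMk (hasDerivAt_const y u))).deriv

theorem ContDiff.differentiable_deriv_comp_prodMk_left {q : 𝕜 × F → G} (hq : ContDiff 𝕜 2 q)
    (y : 𝕜) : Differentiable 𝕜 fun u => deriv (fun y' => q (y', u)) y := by
  have hq' : Differentiable 𝕜 (fderiv 𝕜 q) :=
    (hq.fderiv_right (m := 1) (by norm_num)).differentiable one_ne_zero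
  simp_rw [(hq.differentiable two_ne_zero _).deriv_comp_prodMk_left]
  fun_prop

theorem hasFDerivAt_sum_comp_prodMk {ι : Type*} [Fintype ι] {q : ι → 𝕜 × F → 𝕜}
    (hq : ∀ k, Differentiable 𝕜 (q k)) {h : E → ι → 𝕜} {z : E} (hh : DifferentiableAt 𝕜 h z)
    (u : F) :
    HasFDerivAt (fun z => ∑ k, q k (h z k, u))
      (∑ k, deriv (fun y => q k (y, u)) (h z k) • (proj k).comp (fderiv 𝕜 h z)) z := by
  refine HasFDerivAt.fun_sum fun k _ => ?_
  have hqk : Differentiable 𝕜 fun y => q k (y, u) := by fun_prop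
  exact (hqk _).hasDerivAt.comp_hasFDerivAt z (hasFDerivAt_pi'.1 hh.hasFDerivAt k)

theorem fderiv_fderiv_sum_comp_prodMk_add_apply {ι : Type*} [Fintype ι] {q : ι → 𝕜 × F → 𝕜}
    (hq : ∀ k, ContDiff 𝕜 2 (q k)) {h : E → ι → 𝕜} {g : E → 𝕜} {z : E}
    (hh : DifferentiableAt 𝕜 h z) (hg : DifferentiableAt 𝕜 g z) (e : E) (u w : F) :
    fderiv 𝕜 (fun u' => fderiv 𝕜 (fun z' => (∑ k, q k (h z' k, u')) + g z') z e) u w =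
      ∑ k, fderiv 𝕜 h z e k * fderiv 𝕜 (fun u' => deriv (fun y => q k (y, u')) (h z k)) u w := by
  have hq' k : Differentiable 𝕜 (q k) := (hq k).differentiable two_ne_zero
  have hsplit : (fun u' => fderiv 𝕜 (fun z' => (∑ k, q k (h z' k, u')) + g z') z e) =
      fun u' => (∑ k, fderiv 𝕜 h z e k * deriv (fun y => q k (y, u')) (h z k)) +
        fderiv 𝕜 g z e := by
    funext u'
    have hsum := hasFDerivAt_sum_comp_prodMk hq' hh u'
    rw [fderiv_fun_add hsum.differentiableAt hg, add_apply, hsum.fderiv]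
    simp [mul_comm]
  have hderiv k := (hq k).differentiable_deriv_comp_prodMk_left (h z k)
  rw [hsplit, fderiv_add_const, fderiv_fun_sum fun k _ => ((hderiv k).const_mul _) u]
  simp [fderiv_const_mul ((hderiv _) u)]

end

/-- vanishing of the block `∂z^d/∂ẑ^s` of the Jacobian of `h`
(second half of the proof of Theorem 1 of the LSTD paper). -/
theorem stmt4 (ns nd : ℕ)
    (q : Fin (ns + nd) → ℝ × (Fin nd → ℝ) → ℝ)
    (h : (Fin (ns + nd) → ℝ) → (Fin (ns + nd) → ℝ))
    (hq_smooth : ∀ k, ContDiff ℝ 2 (q k))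
    (hh_smooth : ContDiff ℝ 2 h)
    (hh_det : ∀ zHat : Fin (ns + nd) → ℝ, (fderiv ℝ h zHat).det ≠ 0)
    -- (i): the mixed second partials ∂²L̂/∂u_l ∂ẑ_i vanish for i in the long-term block,
    -- where L̂ (ẑ, u) = ∑ k, q k ((h ẑ) k, u) + log |det (Dh ẑ)|
    (hi : ∀ (i : Fin ns) (l : Fin nd) (zHat : Fin (ns + nd) → ℝ) (u : Fin nd → ℝ),
      fderiv ℝ (fun u' : Fin nd → ℝ =>
          fderiv ℝ (fun z : Fin (ns + nd) → ℝ =>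
              (∑ k : Fin (ns + nd), q k (h z k, u')) + Real.log |(fderiv ℝ h z).det|)
            zHat (Pi.single (Fin.castAdd nd i) 1))
        u (Pi.single l 1) = 0)
    -- (ii): the mixed second partials ∂²q_k/∂u_l ∂z vanish for k in the long-term block
    (hii : ∀ (k : Fin ns) (l : Fin nd) (z : ℝ) (u : Fin nd → ℝ),
      fderiv ℝ (fun u' : Fin nd → ℝ =>
          deriv (fun z' : ℝ => q (Fin.castAdd nd k) (z', u')) z)
        u (Pi.single l 1) = 0)
    -- (iii): linear independence of the vectors of second cross-partials (assumption A3)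
    (hiii : ∀ (zHat : Fin (ns + nd) → ℝ) (u : Fin nd → ℝ),
      LinearIndependent ℝ (fun l : Fin nd => fun j : Fin nd =>
        fderiv ℝ (fun u' : Fin nd → ℝ =>
            deriv (fun z' : ℝ => q (Fin.natAdd ns j) (z', u')) (h zHat (Fin.natAdd ns j)))
          u (Pi.single l 1))) :
    ∀ (i : Fin ns) (j : Fin nd) (zHat : Fin (ns + nd) → ℝ),
      fderiv ℝ (fun z : Fin (ns + nd) → ℝ => h z (Fin.natAdd ns j))
        zHat (Pi.single (Fin.castAdd nd i) 1) = 0 := by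
  intro i j zHat
  have hh_diff : Differentiable ℝ h := hh_smooth.differentiable two_ne_zero
  set c : Fin (ns + nd) → ℝ := fderiv ℝ h zHat (Pi.single (Fin.castAdd nd i) 1)
  have hcross : ∀ l : Fin nd, ∑ k, c k *
      fderiv ℝ (fun u' => deriv (fun y => q k (y, u')) (h zHat k)) 0 (Pi.single l 1) = 0 := by
    intro l
    rw [← fderiv_fderiv_sum_comp_prodMk_add_apply hq_smooth (hh_diff zHat)
      (hh_smooth.differentiable_log_abs_det_fderiv hh_det zHat)]
    exact hi i l zHat 0
  have hshort : (fun j => c (Fin.natAdd ns j)) = 0 := by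
    refine (hiii zHat 0).eq_zero_of_forall_dotProduct_eq_zero fun l => ?_
    have hl := hcross l
    simp only [Fin.sum_univ_add, hii, mul_zero, Finset.sum_const_zero, zero_add] at hl
    exact hl
  rw [fderiv_apply (hh_diff zHat)]
  exact congrFun hshort j
end
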